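/- Let {A_n} be a sequence of Wigner(n,1) matrices with E|X_{12}|⁴ < ∞ and E[X_{11}²] < ∞, let c > 0 with σ(c) > 0, let Ã_n be the truncation of A_n at level c, and set Â_n := A_n − σ(c)·Ã_n. Then almost surely lim_{n→∞} ‖Â_n‖₂² = Var(X_{12}·𝟙_{|X_{12}|>c}), and almost surely lim_{n→∞} ‖Ã_n‖₂ = 1. -/

import Mathlib

open MeasureTheory ProbabilityTheory Matrix Filter Finset

/-- A family (indexed by `L`) of mutually independent infinite entry arrays of
`Wigner(n,1)` matrices: the array is Hermitian (`X_{ji} = conj X_{ij}`), the upper-triangular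
entries (diagonal included) form a mutually independent family across the whole family of
arrays, the strictly-upper entries of each array are identically distributed with mean `0`
and variance `1`, and the diagonal entries of each array are identically distributed and
real-valued. -/
structure IsWignerEntries {Ω : Type*} [MeasurableSpace Ω] (P : MeasureTheory.Measure Ω)
    {L : Type*} (X : L → ℕ → ℕ → Ω → ℂ) : Prop where
  meas : ∀ l i j, Measurable (X l i j)
  herm : ∀ l i j ω, X l j i ω = starRingEnd ℂ (X l i j ω)
  indep : ProbabilityTheory.iIndepFun
    (fun q : L × {q : ℕ × ℕ // q.1 ≤ q.2} => X q.1 q.2.1.1 q.2.1.2) P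
  offdiag_distrib : ∀ l i j, i < j → P.map (X l i j) = P.map (X l 0 1)
  diag_distrib : ∀ l i, P.map (X l i i) = P.map (X l 0 0)
  diag_real : ∀ l i ω, (X l i i ω).im = 0
  mean_zero : ∀ l, ∫ ω, X l 0 1 ω ∂P = 0
  var_one : ∀ l, ∫ ω, ‖X l 0 1 ω‖ ^ 2 ∂P = 1

/-- The `n × n` Wigner matrix built from the entry array: `A_n = (1/√n)(X_{ij})_{i,j<n}`. -/
noncomputable def wignerMat {Ω : Type*} {L : Type*} (X : L → ℕ → ℕ → Ω → ℂ) (l : L)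
    (n : ℕ) (ω : Ω) : Matrix (Fin n) (Fin n) ℂ :=
  Matrix.of fun i j => (Real.sqrt n : ℂ)⁻¹ * X l i.val j.val ω
/-- The "variance" `E‖Y − EY‖²` of a complex random variable. -/
noncomputable def cVar {Ω : Type*} [MeasurableSpace Ω] (P : MeasureTheory.Measure Ω)
    (Y : Ω → ℂ) : ℝ :=
  ∫ ω, ‖Y ω - ∫ ω', Y ω' ∂P‖ ^ 2 ∂P

/-- `z·𝟙_{‖z‖ ≤ c}`. -/
noncomputable def truncBelow (c : ℝ) (z : ℂ) : ℂ := if ‖z‖ ≤ c then z else 0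

/-- `z·𝟙_{‖z‖ > c}`. -/
noncomputable def truncAbove (c : ℝ) (z : ℂ) : ℂ := if ‖z‖ ≤ c then 0 else z

/-- `σ²(c) = Var(X₁₂·𝟙_{|X₁₂| ≤ c})` for the entry array `X`. -/
noncomputable def sigma2 {Ω : Type*} [MeasurableSpace Ω] (P : MeasureTheory.Measure Ω)
    (Y : Ω → ℂ) (c : ℝ) : ℝ :=
  cVar P (fun ω => truncBelow c (Y ω))

/-- The truncation at level `c` of the Wigner matrix with entry array `X`: zero diagonal and
off-diagonal entries `(X_{ij}·𝟙_{|X_{ij}|≤c} − E[X_{ij}·𝟙_{|X_{ij}|≤c}])/σ(c)`, scaled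
by `1/√n`. -/
noncomputable def truncMat {Ω : Type*} [MeasurableSpace Ω] (P : MeasureTheory.Measure Ω)
    (X : ℕ → ℕ → Ω → ℂ) (c : ℝ) (n : ℕ) (ω : Ω) : Matrix (Fin n) (Fin n) ℂ :=
  Matrix.of fun i j =>
    if i = j then 0
    else (Real.sqrt n : ℂ)⁻¹ * (Real.sqrt (sigma2 P (X 0 1) c) : ℂ)⁻¹ *
      (truncBelow c (X i.val j.val ω) - ∫ ω', truncBelow c (X i.val j.val ω') ∂P)
/-- The normalized Schatten 2-norm `‖M‖₂ = (tr_n(MᴴM))^{1/2} = ((1/n)∑_{i,j}‖M_{ij}‖²)^{1/2}`. -/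
noncomputable def schatten2 {n : ℕ} (M : Matrix (Fin n) (Fin n) ℂ) : ℝ :=
  Real.sqrt ((n : ℝ)⁻¹ * ∑ i : Fin n, ∑ j : Fin n, ‖M i j‖ ^ 2)


/-!
Up to the factor `1/√n`, every entry of `Â_n` and of `Ã_n` is a fixed measurable function of the
corresponding entry of `A_n`: on the diagonal `X_{ii}` resp. `0`; above it
`X_{ij}𝟙_{|X_{ij}|>c} - E[X_{12}𝟙_{|X_{12}|>c}]` (because `E X_{12} = 0`) resp.
`(X_{ij}𝟙_{|X_{ij}|≤c} - E[X_{12}𝟙_{|X_{12}|≤c}])/σ(c)`. Hence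
`‖M_n‖₂² = n⁻²(∑_{i<n} D_i + 2∑_{i<j<n} U_{ij})` with `(D_i)` and `(U_{ij})_{i<j}` i.i.d. and
integrable. By the strong law of large numbers `n⁻¹∑_{i<n} D_i` converges, so the diagonal term
vanishes in the limit; listing the pairs `i < j` by increasing `j`, the first `n(n-1)/2` of them
are those with `j < n`, and the strong law along this enumeration gives `‖M_n‖₂² → E U`.
-/

open Topology ComplexConjugate

namespace WignerTruncation

lemma choose_two_succ (n : ℕ) : (n + 1).choose 2 = n.choose 2 + n := by
  rw [Nat.choose_succ_succ', Nat.choose_one_right, add_comm]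

lemma exists_lt_choose_two_succ (k : ℕ) : ∃ j, k < (j + 1).choose 2 :=
  ⟨k + 1, by rw [choose_two_succ]; omega⟩

/-- The `k`-th pair `(i, j)` with `i < j`, the pairs being listed by increasing `j`, then `i`. -/
def upperPair (k : ℕ) : ℕ × ℕ :=
  (k - (Nat.find (exists_lt_choose_two_succ k)).choose 2, Nat.find (exists_lt_choose_two_succ k))

lemma choose_two_add_upperPair (k : ℕ) :
    (upperPair k).2.choose 2 + (upperPair k).1 = k ∧ (upperPair k).1 < (upperPair k).2 := by
  set j := Nat.find (exists_lt_choose_two_succ k) with hj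
  have hlt : k < j.choose 2 + j := choose_two_succ j ▸ Nat.find_spec (exists_lt_choose_two_succ k)
  have hle : j.choose 2 ≤ k := by
    rcases Nat.eq_zero_or_pos j with h | h
    · simp [h]
    · have := Nat.find_min (exists_lt_choose_two_succ k) (m := j - 1) (by omega)
      rwa [Nat.sub_add_cancel h, not_lt] at this
  simp only [upperPair, ← hj]
  omega

lemma upperPair_fst_lt_snd (k : ℕ) : (upperPair k).1 < (upperPair k).2 :=
  (choose_two_add_upperPair k).2

lemma upperPair_injective : Function.Injective upperPair := fun k l h => by
  rw [← (choose_two_add_upperPair k).1, ← (choose_two_add_upperPair l).1, h]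

lemma upperPair_choose_two_add {i j : ℕ} (h : i < j) : upperPair (j.choose 2 + i) = (i, j) := by
  have hj : Nat.find (exists_lt_choose_two_succ (j.choose 2 + i)) = j := by
    rw [Nat.find_eq_iff, choose_two_succ]
    refine ⟨by omega, fun m hm => ?_⟩
    have := Nat.choose_le_choose 2 (show m + 1 ≤ j by omega)
    omega
  simp only [upperPair, hj, Nat.add_sub_cancel_left]

lemma sum_range_choose_two_upperPair {M : Type*} [AddCommMonoid M] (f : ℕ × ℕ → M) (n : ℕ) :
    ∑ k ∈ range (n.choose 2), f (upperPair k) = ∑ j ∈ range n, ∑ i ∈ range j, f (i, j) := by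
  induction n with
  | zero => simp
  | succ n ih =>
    rw [choose_two_succ, sum_range_add, ih, sum_range_succ]
    congr 1
    exact sum_congr rfl fun i hi => by rw [upperPair_choose_two_add (mem_range.mp hi)]

lemma tendsto_choose_two_atTop : Tendsto (fun n : ℕ => n.choose 2) atTop atTop :=
  tendsto_atTop_atTop.mpr fun b =>
    ⟨b + 1, fun _ h => (choose_two_succ b ▸ Nat.le_add_left b _).trans (Nat.choose_le_choose 2 h)⟩

lemma sum_range_sum_range_of_symm {R : Type*} [CommSemiring R] (g : ℕ → ℕ → R)
    (hg : ∀ i j, g j i = g i j) (n : ℕ) :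
    ∑ i ∈ range n, ∑ j ∈ range n, g i j =
      ∑ i ∈ range n, g i i + 2 * ∑ j ∈ range n, ∑ i ∈ range j, g i j := by
  induction n with
  | zero => simp
  | succ n ih =>
    simp only [sum_range_succ, sum_add_distrib, ih, hg n]
    ring

lemma tendsto_inv_sq_mul_add_two_mul_choose_two {D S : ℕ → ℝ} {a μ : ℝ}
    (hD : Tendsto (fun n : ℕ => D n / n) atTop (𝓝 a))
    (hS : Tendsto (fun N : ℕ => S N / N) atTop (𝓝 μ)) :
    Tendsto (fun n : ℕ => ((n : ℝ) * n)⁻¹ * (D n + 2 * S (n.choose 2))) atTop (𝓝 μ) := by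
  have hlim : Tendsto (fun n : ℕ => (n : ℝ)⁻¹ * (D n / n) +
      (1 - (n : ℝ)⁻¹) * (S (n.choose 2) / (n.choose 2 : ℕ))) atTop (𝓝 (0 * a + (1 - 0) * μ)) :=
    (tendsto_inv_atTop_nhds_zero_nat.mul hD).add
      ((tendsto_const_nhds.sub tendsto_inv_atTop_nhds_zero_nat).mul
        (hS.comp tendsto_choose_two_atTop))
  rw [zero_mul, zero_add, sub_zero, one_mul] at hlim
  refine hlim.congr' ?_
  filter_upwards [eventually_ge_atTop 2] with n hn
  have hn1 : (n : ℝ) - 1 ≠ 0 := by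
    have : (2 : ℝ) ≤ n := by exact_mod_cast hn
    linarith
  rw [Nat.cast_choose_two]
  field_simp

lemma norm_inv_sqrt_mul_sq {r : ℝ} (hr : 0 ≤ r) (z : ℂ) :
    ‖(Real.sqrt r : ℂ)⁻¹ * z‖ ^ 2 = r⁻¹ * ‖z‖ ^ 2 := by
  rw [norm_mul, norm_inv, Complex.norm_real, Real.norm_of_nonneg (Real.sqrt_nonneg r), mul_pow,
    inv_pow, Real.sq_sqrt hr]

lemma schatten2_sq_of_norm_symm (Y : ℕ → ℕ → ℂ) (hY : ∀ i j, ‖Y j i‖ = ‖Y i j‖) (n : ℕ) :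
    schatten2 (of fun i j : Fin n => (Real.sqrt n : ℂ)⁻¹ * Y i j) ^ 2 =
      ((n : ℝ) * n)⁻¹ * (∑ i ∈ range n, ‖Y i i‖ ^ 2 +
        2 * ∑ k ∈ range (n.choose 2), ‖Y (upperPair k).1 (upperPair k).2‖ ^ 2) := by
  rw [schatten2, Real.sq_sqrt (by positivity),
    sum_range_choose_two_upperPair (fun p => ‖Y p.1 p.2‖ ^ 2),
    ← sum_range_sum_range_of_symm (fun i j => ‖Y i j‖ ^ 2) (fun i j => by rw [hY]) n]
  simp only [of_apply, norm_inv_sqrt_mul_sq (Nat.cast_nonneg n), ← mul_sum, mul_inv, mul_assoc,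
    Finset.sum_range]

end WignerTruncation

open WignerTruncation

section Truncation

variable {α : Type*} [MeasurableSpace α] {μ : Measure α} {p : ENNReal} {f : α → ℂ} (c : ℝ)

lemma measurable_truncBelow : Measurable (truncBelow c) :=
  Measurable.ite (measurableSet_le measurable_norm measurable_const) measurable_id measurable_const

lemma measurable_truncAbove : Measurable (truncAbove c) :=
  Measurable.ite (measurableSet_le measurable_norm measurable_const) measurable_const measurable_id

lemma truncBelow_add_truncAbove (z : ℂ) : truncBelow c z + truncAbove c z = z := by
  unfold truncBelow truncAbove; split_ifs <;> simp

lemma norm_truncBelow_le (z : ℂ) : ‖truncBelow c z‖ ≤ ‖z‖ := by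
  unfold truncBelow; split_ifs <;> simp

lemma norm_truncAbove_le (z : ℂ) : ‖truncAbove c z‖ ≤ ‖z‖ := by
  unfold truncAbove; split_ifs <;> simp

lemma truncBelow_conj (z : ℂ) : truncBelow c (conj z) = conj (truncBelow c z) := by
  unfold truncBelow; rw [RCLike.norm_conj]; split_ifs <;> simp

lemma MeasureTheory.MemLp.truncBelow (hf : MemLp f p μ) : MemLp (fun x => truncBelow c (f x)) p μ :=
  hf.of_le ((measurable_truncBelow c).comp_aemeasurable hf.aemeasurable).aestronglyMeasurable
    (ae_of_all _ fun x => norm_truncBelow_le c (f x))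

lemma MeasureTheory.MemLp.truncAbove (hf : MemLp f p μ) : MemLp (fun x => truncAbove c (f x)) p μ :=
  hf.of_le ((measurable_truncAbove c).comp_aemeasurable hf.aemeasurable).aestronglyMeasurable
    (ae_of_all _ fun x => norm_truncAbove_le c (f x))

lemma integral_truncBelow_add_integral_truncAbove (hf : Integrable f μ) :
    ∫ x, truncBelow c (f x) ∂μ + ∫ x, truncAbove c (f x) ∂μ = ∫ x, f x ∂μ := by
  rw [← memLp_one_iff_integrable] at hf
  rw [← integral_add (memLp_one_iff_integrable.1 (hf.truncBelow c))
    (memLp_one_iff_integrable.1 (hf.truncAbove c))]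
  simp only [truncBelow_add_truncAbove]

end Truncation

namespace IsWignerEntries

variable {Ω L : Type*} [MeasurableSpace Ω] {P : Measure Ω} {X : L → ℕ → ℕ → Ω → ℂ}

lemma indepFun_entry (hX : IsWignerEntries P X) (l : L) {i j i' j' : ℕ} (h : i ≤ j) (h' : i' ≤ j')
    (hne : (i, j) ≠ (i', j')) : IndepFun (X l i j) (X l i' j') P :=
  hX.indep.indepFun (i := (l, ⟨(i, j), h⟩)) (j := (l, ⟨(i', j'), h'⟩)) (by simpa using hne)

lemma identDistrib_offDiag (hX : IsWignerEntries P X) (l : L) {i j : ℕ} (h : i < j) :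
    IdentDistrib (X l i j) (X l 0 1) P P :=
  ⟨(hX.meas l i j).aemeasurable, (hX.meas l 0 1).aemeasurable, hX.offdiag_distrib l i j h⟩

lemma identDistrib_diag (hX : IsWignerEntries P X) (l : L) (i : ℕ) :
    IdentDistrib (X l i i) (X l 0 0) P P :=
  ⟨(hX.meas l i i).aemeasurable, (hX.meas l 0 0).aemeasurable, hX.diag_distrib l i⟩

lemma integral_comp_offDiag (hX : IsWignerEntries P X) (l : L) {i j : ℕ} (h : i < j) {f : ℂ → ℂ}
    (hf : Measurable f) : ∫ ω, f (X l i j ω) ∂P = ∫ ω, f (X l 0 1 ω) ∂P :=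
  ((hX.identDistrib_offDiag l h).comp hf).integral_eq

lemma ae_tendsto_diag (hX : IsWignerEntries P X) (l : L) {φ : ℂ → ℝ} (hφ : Measurable φ)
    (hint : Integrable (fun ω => φ (X l 0 0 ω)) P) :
    ∀ᵐ ω ∂P, Tendsto (fun n : ℕ => (∑ i ∈ range n, φ (X l i i ω)) / n) atTop
      (𝓝 (∫ ω, φ (X l 0 0 ω) ∂P)) :=
  strong_law_ae_real (fun i ω => φ (X l i i ω)) hint
    (fun _ _ hne => (hX.indepFun_entry l le_rfl le_rfl (by simpa using hne)).comp hφ hφ)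
    (fun i => (hX.identDistrib_diag l i).comp hφ)

lemma ae_tendsto_upperPair (hX : IsWignerEntries P X) (l : L) {φ : ℂ → ℝ} (hφ : Measurable φ)
    (hint : Integrable (fun ω => φ (X l 0 1 ω)) P) :
    ∀ᵐ ω ∂P, Tendsto
      (fun N : ℕ => (∑ k ∈ range N, φ (X l (upperPair k).1 (upperPair k).2 ω)) / N) atTop
      (𝓝 (∫ ω, φ (X l 0 1 ω) ∂P)) := by
  have hident (k : ℕ) : IdentDistrib (fun ω => φ (X l (upperPair k).1 (upperPair k).2 ω))
      (fun ω => φ (X l 0 1 ω)) P P :=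
    (hX.identDistrib_offDiag l (upperPair_fst_lt_snd k)).comp hφ
  rw [← (hident 0).integral_eq]
  refine strong_law_ae_real (fun k ω => φ (X l (upperPair k).1 (upperPair k).2 ω))
    ((hident 0).integrable_iff.2 hint) (fun k k' hne => ?_)
    (fun k => (hident k).trans (hident 0).symm)
  exact (hX.indepFun_entry l (upperPair_fst_lt_snd k).le (upperPair_fst_lt_snd k').le
    (upperPair_injective.ne hne)).comp hφ hφ

theorem ae_tendsto_schatten2_sq (hX : IsWignerEntries P X) (l : L) (Y : ℕ → ℕ → Ω → ℂ)
    (hY : ∀ i j ω, ‖Y j i ω‖ = ‖Y i j ω‖) {φd φu : ℂ → ℝ} (hφd : Measurable φd)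
    (hφu : Measurable φu) (hd : ∀ i ω, ‖Y i i ω‖ ^ 2 = φd (X l i i ω))
    (hu : ∀ i j, i < j → ∀ ω, ‖Y i j ω‖ ^ 2 = φu (X l i j ω))
    (hid : Integrable (fun ω => φd (X l 0 0 ω)) P) (hiu : Integrable (fun ω => φu (X l 0 1 ω)) P) :
    ∀ᵐ ω ∂P, Tendsto
      (fun n : ℕ => schatten2 (of fun i j : Fin n => (Real.sqrt n : ℂ)⁻¹ * Y i j ω) ^ 2) atTop
      (𝓝 (∫ ω, φu (X l 0 1 ω) ∂P)) := by
  filter_upwards [hX.ae_tendsto_diag l hφd hid, hX.ae_tendsto_upperPair l hφu hiu] with ω hD hU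
  refine (tendsto_inv_sq_mul_add_two_mul_choose_two hD hU).congr fun n => ?_
  rw [schatten2_sq_of_norm_symm (Y · · ω) (fun i j => hY i j ω)]
  simp only [hd, hu _ _ (upperPair_fst_lt_snd _)]

lemma memLp_two (hX : IsWignerEntries P X) (l : L) : MemLp (X l 0 1) 2 P :=
  (memLp_two_iff_integrable_sq_norm (hX.meas l 0 1).aestronglyMeasurable).2
    (Integrable.of_integral_ne_zero (by rw [hX.var_one l]; exact one_ne_zero))

end IsWignerEntries

section TruncatedMatrices

variable {Ω : Type*} [MeasurableSpace Ω]

noncomputable def centeredTrunc (P : Measure Ω) (X : ℕ → ℕ → Ω → ℂ) (c : ℝ) (i j : ℕ) (ω : Ω) : ℂ :=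
  if i = j then 0 else truncBelow c (X i j ω) - ∫ ω', truncBelow c (X i j ω') ∂P

variable {P : Measure Ω} {X : ℕ → ℕ → Ω → ℂ} {c : ℝ}

lemma truncMat_eq (n : ℕ) (ω : Ω) :
    truncMat P X c n ω = of fun i j : Fin n => (Real.sqrt n : ℂ)⁻¹ *
      ((Real.sqrt (sigma2 P (X 0 1) c) : ℂ)⁻¹ * centeredTrunc P X c i j ω) := by
  ext i j
  simp only [truncMat, centeredTrunc, of_apply, Fin.val_inj]
  split_ifs <;> ring

lemma wignerMat_sub_smul_truncMat (hσ : 0 < sigma2 P (X 0 1) c) (n : ℕ) (ω : Ω) :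
    wignerMat (fun _ : Fin 1 => X) 0 n ω -
        (Real.sqrt (sigma2 P (X 0 1) c) : ℂ) • truncMat P X c n ω =
      of fun i j : Fin n => (Real.sqrt n : ℂ)⁻¹ * (X i j ω - centeredTrunc P X c i j ω) := by
  have hs : (Real.sqrt (sigma2 P (X 0 1) c) : ℂ) ≠ 0 :=
    Complex.ofReal_ne_zero.2 (Real.sqrt_pos.2 hσ).ne'
  ext i j
  simp only [truncMat_eq, wignerMat, Matrix.sub_apply, Matrix.smul_apply, of_apply, smul_eq_mul]
  field_simp

lemma centeredTrunc_conj (hX : ∀ i j ω, X j i ω = conj (X i j ω)) (i j : ℕ) (ω : Ω) :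
    centeredTrunc P X c j i ω = conj (centeredTrunc P X c i j ω) := by
  by_cases h : i = j
  · subst h
    simp [centeredTrunc]
  · simp only [centeredTrunc, if_neg h, if_neg (Ne.symm h), hX i j, truncBelow_conj,
      integral_conj, map_sub]

variable [IsProbabilityMeasure P]

lemma ae_tendsto_schatten2_sq_wignerMat_sub_smul_truncMat
    (hX : IsWignerEntries P (fun _ : Fin 1 => X)) (h2 : Integrable (fun ω => ‖X 0 0 ω‖ ^ 2) P)
    (hσ : 0 < sigma2 P (X 0 1) c) :
    ∀ᵐ ω ∂P, Tendsto (fun n => schatten2 (wignerMat (fun _ : Fin 1 => X) 0 n ω -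
        (Real.sqrt (sigma2 P (X 0 1) c) : ℂ) • truncMat P X c n ω) ^ 2)
      atTop (𝓝 (cVar P fun ω => truncAbove c (X 0 1 ω))) := by
  set MB := ∫ ω, truncBelow c (X 0 1 ω) ∂P
  have hX01 : MemLp (X 0 1) 2 P := hX.memLp_two 0
  have hherm : ∀ i j ω, X j i ω = conj (X i j ω) := hX.herm 0
  have hmean : ∫ ω, truncAbove c (X 0 1 ω) ∂P = -MB := by
    rw [eq_neg_iff_add_eq_zero, add_comm,
      integral_truncBelow_add_integral_truncAbove c (hX01.integrable one_le_two), hX.mean_zero 0]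
  have hupper (i j : ℕ) (h : i < j) (ω : Ω) :
      X i j ω - centeredTrunc P X c i j ω = truncAbove c (X i j ω) + MB := by
    rw [centeredTrunc, if_neg h.ne,
      hX.integral_comp_offDiag 0 h (measurable_truncBelow c)]
    linear_combination (truncBelow_add_truncAbove c (X i j ω)).symm
  have hvar : cVar P (fun ω => truncAbove c (X 0 1 ω)) =
      ∫ ω, ‖truncAbove c (X 0 1 ω) + MB‖ ^ 2 ∂P := by
    simp only [cVar, hmean, sub_neg_eq_add]
  simp only [wignerMat_sub_smul_truncMat hσ, hvar]
  refine hX.ae_tendsto_schatten2_sq 0 (fun i j ω => X i j ω - centeredTrunc P X c i j ω)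
    (φd := fun z => ‖z‖ ^ 2) (φu := fun z => ‖truncAbove c z + MB‖ ^ 2)
    (fun i j ω => ?_) (measurable_norm.pow_const 2)
    (((measurable_truncAbove c).add_const MB).norm.pow_const 2)
    (fun i ω => by simp [centeredTrunc]) (fun i j h ω => by rw [hupper i j h]) h2
    ((hX01.truncAbove c).add (memLp_const MB)).integrable_norm_pow'
  rw [hherm i j, centeredTrunc_conj hherm, ← map_sub, RCLike.norm_conj]

lemma ae_tendsto_schatten2_sq_truncMat (hX : IsWignerEntries P (fun _ : Fin 1 => X))
    (hσ : 0 < sigma2 P (X 0 1) c) :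
    ∀ᵐ ω ∂P, Tendsto (fun n => schatten2 (truncMat P X c n ω) ^ 2) atTop (𝓝 1) := by
  set σ2 := sigma2 P (X 0 1) c
  set MB := ∫ ω, truncBelow c (X 0 1 ω) ∂P
  have hupper (i j : ℕ) (h : i < j) (ω : Ω) :
      ‖(Real.sqrt σ2 : ℂ)⁻¹ * centeredTrunc P X c i j ω‖ ^ 2 =
        σ2⁻¹ * ‖truncBelow c (X i j ω) - MB‖ ^ 2 := by
    rw [norm_inv_sqrt_mul_sq hσ.le, centeredTrunc, if_neg h.ne,
      hX.integral_comp_offDiag 0 h (measurable_truncBelow c)]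
  have hone : ∫ ω, σ2⁻¹ * ‖truncBelow c (X 0 1 ω) - MB‖ ^ 2 ∂P = 1 := by
    rw [integral_const_mul]
    exact inv_mul_cancel₀ hσ.ne'
  simp only [truncMat_eq]
  rw [← hone]
  refine hX.ae_tendsto_schatten2_sq 0
    (fun i j ω => (Real.sqrt σ2 : ℂ)⁻¹ * centeredTrunc P X c i j ω)
    (φd := fun _ => 0) (φu := fun z => σ2⁻¹ * ‖truncBelow c z - MB‖ ^ 2)
    (fun i j ω => ?_) measurable_const
    ((((measurable_truncBelow c).sub_const MB).norm.pow_const 2).const_mul σ2⁻¹)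
    (fun i ω => by simp [centeredTrunc]) hupper (integrable_const 0)
    ((((hX.memLp_two 0).truncBelow c).sub (memLp_const MB)).integrable_norm_pow'.const_mul σ2⁻¹)
  rw [norm_mul, norm_mul, centeredTrunc_conj (hX.herm 0), RCLike.norm_conj]

end TruncatedMatrices

theorem statement18_general {Ω : Type*} [MeasurableSpace Ω] (P : Measure Ω) [IsProbabilityMeasure P]
    (X : ℕ → ℕ → Ω → ℂ) (hX : IsWignerEntries P (fun _ : Fin 1 => X))
    (h2 : Integrable (fun ω => ‖X 0 0 ω‖ ^ 2) P)
    (c : ℝ) (hσ : 0 < sigma2 P (X 0 1) c) :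
    (∀ᵐ ω ∂P,
      Tendsto (fun n => schatten2 (wignerMat (fun _ : Fin 1 => X) 0 n ω -
            (Real.sqrt (sigma2 P (X 0 1) c) : ℂ) • truncMat P X c n ω) ^ 2)
        atTop (nhds (cVar P fun ω => truncAbove c (X 0 1 ω)))) ∧
    (∀ᵐ ω ∂P,
      Tendsto (fun n => schatten2 (truncMat P X c n ω)) atTop (nhds 1)) := by
  refine ⟨ae_tendsto_schatten2_sq_wignerMat_sub_smul_truncMat hX h2 hσ, ?_⟩
  filter_upwards [ae_tendsto_schatten2_sq_truncMat hX hσ] with ω h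
  have hsqrt := (Real.continuous_sqrt.tendsto 1).comp h
  rw [Real.sqrt_one] at hsqrt
  exact hsqrt.congr fun n => Real.sqrt_sq (Real.sqrt_nonneg _)

/-- With `Â_n = A_n − σ(c)·Ã_n`: almost surely
`lim_n ‖Â_n‖₂² = Var(X₁₂·𝟙_{|X₁₂|>c})` and almost surely `lim_n ‖Ã_n‖₂ = 1`. -/
theorem statement18 {Ω : Type*} [MeasurableSpace Ω] (P : Measure Ω) [IsProbabilityMeasure P]
    (X : ℕ → ℕ → Ω → ℂ) (hX : IsWignerEntries P (fun _ : Fin 1 => X))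
    (h4 : Integrable (fun ω => ‖X 0 1 ω‖ ^ 4) P)
    (h2 : Integrable (fun ω => ‖X 0 0 ω‖ ^ 2) P)
    (c : ℝ) (hc : 0 < c) (hσ : 0 < sigma2 P (X 0 1) c) :
    (∀ᵐ ω ∂P,
      Tendsto (fun n => schatten2 (wignerMat (fun _ : Fin 1 => X) 0 n ω -
            (Real.sqrt (sigma2 P (X 0 1) c) : ℂ) • truncMat P X c n ω) ^ 2)
        atTop (nhds (cVar P fun ω => truncAbove c (X 0 1 ω)))) ∧
    (∀ᵐ ω ∂P,
      Tendsto (fun n => schatten2 (truncMat P X c n ω)) atTop (nhds 1)) :=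
  statement18_general P X hX h2 c hσ
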